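/- For all t > 0 and x ∈ ℝ, ∫_0^t ∫_ℝ p²_{t-s}(x-y) · p²_s(y) dy ds = p²_t(x) · ∫_0^t sqrt(t/(4π s(t-s))) ds, and this quantity is finite; in particular ∫_0^t sqrt(t/(4π s(t-s))) ds = sqrt(πt)/2. -/

import Mathlib

open Real MeasureTheory Set intervalIntegral Filter

noncomputable def heatK (t x : ℝ) : ℝ := (2 * π * t) ^ (-(1:ℝ)/2) * Real.exp (-x^2 / (2*t))

lemma heatK_sq (u z : ℝ) (hu : 0 < u) :
    (heatK u z)^2 = (2*π*u)⁻¹ * Real.exp (-z^2/u) := by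
  have hπ : (0:ℝ) < π := Real.pi_pos
  unfold heatK
  rw [mul_pow, ← Real.rpow_natCast ((2*π*u) ^ (-(1:ℝ)/2)) 2, ← Real.rpow_mul (by positivity),
    ← Real.exp_nat_mul]
  norm_num
  rw [Real.rpow_neg_one]
  · ring

lemma heatK_zero (z : ℝ) : heatK 0 z = 0 := by
  unfold heatK
  rw [mul_zero, Real.zero_rpow (by norm_num)]
  ring

lemma lemA (t x s : ℝ) (hs0 : 0 < s) (hst : s < t) :
    (∫ y : ℝ, (heatK (t - s) (x - y)) ^ 2 * (heatK s y) ^ 2)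
      = (heatK t x) ^ 2 * Real.sqrt (t / (4 * π * s * (t - s))) := by
  have hπ : (0:ℝ) < π := Real.pi_pos
  have ht : (0:ℝ) < t := lt_trans hs0 hst
  have hts : (0:ℝ) < t - s := by linarith
  set a := t - s with ha
  set c := t / (a * s) with hc
  have hcpos : 0 < c := by positivity
  set m := s * x / t with hm
  have key : ∀ y : ℝ, (heatK a (x - y)) ^ 2 * (heatK s y) ^ 2
      = ((2*π*a)⁻¹ * (2*π*s)⁻¹ * Real.exp (-x^2/t)) * Real.exp (-c * (y - m)^2) := by
    intro y
    rw [heatK_sq _ _ hts, heatK_sq _ _ hs0]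
    have hexp : Real.exp (-(x-y)^2/a) * Real.exp (-y^2/s)
        = Real.exp (-x^2/t) * Real.exp (-c * (y-m)^2) := by
      rw [← Real.exp_add, ← Real.exp_add]
      congr 1
      rw [hc, hm, ha]
      field_simp [(sub_pos.mpr hst).ne']
      ring
    linear_combination ((2*π*a)⁻¹ * (2*π*s)⁻¹) * hexp
  rw [MeasureTheory.integral_congr_ae (Filter.Eventually.of_forall key)]
  rw [MeasureTheory.integral_const_mul]
  have hshift : (∫ y : ℝ, Real.exp (-c * (y - m)^2)) = ∫ y : ℝ, Real.exp (-c * y^2) :=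
    MeasureTheory.integral_sub_right_eq_self (fun y => Real.exp (-c * y^2)) m
  rw [hshift, integral_gaussian]
  rw [heatK_sq _ _ ht]
  rw [show (2*π*a)⁻¹ * (2*π*s)⁻¹ * Real.exp (-x^2/t) * √(π/c)
      = ((2*π*a)⁻¹ * (2*π*s)⁻¹ * √(π/c)) * Real.exp (-x^2/t) by ring,
    show (2*π*t)⁻¹ * Real.exp (-x^2/t) * √(t/(4*π*s*a)) =
      ((2*π*t)⁻¹ * √(t/(4*π*s*a))) * Real.exp (-x^2/t) by ring]
  congr 1
  have h1 : (0:ℝ) ≤ (2*π*a)⁻¹ * (2*π*s)⁻¹ * √(π/c) := by positivity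
  have h2 : (0:ℝ) ≤ (2*π*t)⁻¹ * √(t/(4*π*s*a)) := by positivity
  rw [← Real.sqrt_sq h1, ← Real.sqrt_sq h2]
  congr 1
  simp only [mul_pow]
  rw [Real.sq_sqrt (by positivity : (0:ℝ) ≤ π/c),
    Real.sq_sqrt (by positivity : (0:ℝ) ≤ t/(4*π*s*a))]
  rw [hc]
  field_simp
  ring

lemma lemB (t : ℝ) (ht : 0 < t) :
    (∫ s in (0:ℝ)..t, Real.sqrt (t / (4 * π * s * (t - s)))) = Real.sqrt (π * t) / 2 := by
  set G : ℝ → ℝ := fun s => Real.sqrt (t / (4 * π)) * Real.arcsin (2 * s / t - 1) with hG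
  have hπ : (0:ℝ) < π := Real.pi_pos
  have hderiv : ∀ s ∈ Ioo (0:ℝ) t,
      HasDerivAt G (Real.sqrt (t / (4 * π * s * (t - s)))) s := by
    intro s hs
    obtain ⟨hs0, hst⟩ := hs
    have hts : (0:ℝ) < t - s := by linarith
    have h1 : (2 * s / t - 1) ≠ -1 := by
      intro h
      have : s = 0 := by field_simp at h; linarith
      linarith
    have h2 : (2 * s / t - 1) ≠ 1 := by
      intro h
      have : s = t := by field_simp at h; linarith
      linarith
    have harc := Real.hasDerivAt_arcsin h1 h2
    have hinner : HasDerivAt (fun s : ℝ => 2 * s / t - 1) (2 / t) s := by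
      simpa using ((hasDerivAt_id s).const_mul 2 |>.div_const t |>.sub_const 1)
    have hd := (harc.comp s hinner).const_mul (Real.sqrt (t / (4 * π)))
    refine hd.congr_deriv (Eq.symm ?_)
    have hsq : 1 - (2 * s / t - 1) ^ 2 = 4 * s * (t - s) / t ^ 2 := by
      field_simp; ring
    rw [hsq]
    have hRnn : (0:ℝ) ≤ √(t / (4 * π)) * (1 / √(4 * s * (t - s) / t ^ 2) * (2 / t)) := by
      positivity
    rw [← Real.sqrt_sq hRnn]
    congr 1
    rw [mul_pow, mul_pow, div_pow, div_pow, one_pow, Real.sq_sqrt (by positivity),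
      Real.sq_sqrt (by positivity : (0:ℝ) ≤ 4 * s * (t - s) / t ^ 2)]
    field_simp
    ring
  have hcont : ContinuousOn G (Icc (0:ℝ) t) :=
    (continuous_const.mul (Real.continuous_arcsin.comp (by continuity))).continuousOn
  have hint : IntervalIntegrable (fun s => Real.sqrt (t / (4 * π * s * (t - s)))) volume 0 t := by
    apply intervalIntegrable_deriv_of_nonneg
    · rwa [uIcc_of_le ht.le]
    · rwa [min_eq_left ht.le, max_eq_right ht.le]
    · intro s _; exact Real.sqrt_nonneg _
  rw [integral_eq_sub_of_hasDerivAt_of_le ht.le hcont hderiv hint]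
  simp only [hG]
  rw [show 2 * t / t - 1 = 1 by rw [mul_div_assoc, div_self ht.ne']; norm_num,
    show 2 * 0 / t - 1 = -1 by simp]
  rw [Real.arcsin_one, Real.arcsin_neg_one]
  have e1 : √(t / (4 * π)) * (π / 2) - √(t / (4 * π)) * -(π / 2) = √(t / (4 * π)) * √(π ^ 2) := by
    rw [Real.sqrt_sq hπ.le]; ring
  rw [e1, ← Real.sqrt_mul (by positivity) (π ^ 2),
    show t / (4 * π) * π ^ 2 = (π * t) / 4 by field_simp,
    Real.sqrt_div (by positivity) 4, show √(4:ℝ) = 2 by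
      rw [show (4:ℝ) = 2 ^ 2 by norm_num, Real.sqrt_sq (by norm_num)]]

theorem stmt_4 (t x : ℝ) (ht : 0 < t) :
    (∫ s in (0:ℝ)..t, ∫ y : ℝ, (heatK (t - s) (x - y)) ^ 2 * (heatK s y) ^ 2)
        = (heatK t x) ^ 2 * ∫ s in (0:ℝ)..t, Real.sqrt (t / (4 * π * s * (t - s)))
      ∧ (∫ s in (0:ℝ)..t, Real.sqrt (t / (4 * π * s * (t - s)))) = Real.sqrt (π * t) / 2 := by
  constructor
  · have hEq : EqOn (fun s => ∫ y : ℝ, (heatK (t - s) (x - y)) ^ 2 * (heatK s y) ^ 2)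
        (fun s => (heatK t x) ^ 2 * Real.sqrt (t / (4 * π * s * (t - s)))) (uIcc 0 t) := by
      rw [uIcc_of_le ht.le]
      intro s hs
      rcases eq_or_lt_of_le hs.1 with h0 | h0
      · simp only [← h0]
        simp [heatK_zero]
      rcases eq_or_lt_of_le hs.2 with h1 | h1
      · simp only [h1]
        simp [heatK_zero, sub_self]
      · exact lemA t x s h0 h1
    rw [intervalIntegral.integral_congr hEq, intervalIntegral.integral_const_mul]
  · exact lemB t ht
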